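/- arXiv:2510.17571 — 2 statements merged into one kernel-verified Lean document; each statement's English description precedes it below -/
import Mathlib

section
/- Let T_2 = ∂_x² − 2x∂_x, U = ∂_x + b, V = −∂_x + 2x + b, Â = T_2 + b² − (x+b)^{-1}∘U, and Â† = T_2 + b² − V∘(x+b)^{-1}. Then Â† ∘ Â = (T_2 + b²)(T_2 + b² − 2) as operators on smooth functions defined away from x = −b. -/
/-- The classical Hermite differential operator T₂ = ∂ₓ² − 2x∂ₓ. -/
noncomputable def T2 (f : ℝ → ℝ) : ℝ → ℝ := fun x => deriv (deriv f) x - 2 * x * deriv f x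

/-- U = ∂ₓ + b. -/
noncomputable def Uop (b : ℝ) (f : ℝ → ℝ) : ℝ → ℝ := fun x => deriv f x + b * f x

/-- V = −∂ₓ + 2x + b. -/
noncomputable def Vop (b : ℝ) (f : ℝ → ℝ) : ℝ → ℝ := fun x => -deriv f x + (2 * x + b) * f x

/-- Â = T₂ + b² − (x+b)⁻¹ ∘ U. -/
noncomputable def Ahat (b : ℝ) (f : ℝ → ℝ) : ℝ → ℝ :=
  fun x => T2 f x + b ^ 2 * f x - Uop b f x / (x + b)

/-- Â† = T₂ + b² − V ∘ (x+b)⁻¹. -/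
noncomputable def Adag (b : ℝ) (f : ℝ → ℝ) : ℝ → ℝ :=
  fun x => T2 f x + b ^ 2 * f x - Vop b (fun y => f y / (y + b)) x

theorem Adag_Ahat_eq_p2_T2 (b : ℝ) (f : ℝ → ℝ) (hf : ContDiff ℝ (⊤ : ℕ∞) f)
    (x : ℝ) (hx : x ≠ -b) :
    Adag b (Ahat b f) x
      = T2 (fun y => T2 f y + (b ^ 2 - 2) * f y) x
        + b ^ 2 * (T2 f x + (b ^ 2 - 2) * f x) := by
  have hxb : x + b ≠ 0 := fun h => hx (by linarith)
  have hc0 : ContDiff ℝ (⊤ : ℕ∞) f := hf.of_le (by simp)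
  have hc1 : ContDiff ℝ (⊤ : ℕ∞) (deriv f) := (contDiff_infty_iff_deriv.mp hc0).2
  have hc2 : ContDiff ℝ (⊤ : ℕ∞) (deriv (deriv f)) := (contDiff_infty_iff_deriv.mp hc1).2
  have hc3 : ContDiff ℝ (⊤ : ℕ∞) (deriv (deriv (deriv f))) := (contDiff_infty_iff_deriv.mp hc2).2
  have hd0 : ∀ y, HasDerivAt f (deriv f y) y :=
    fun y => (hc0.differentiable (by simp) y).hasDerivAt
  have hd1 : ∀ y, HasDerivAt (deriv f) (deriv (deriv f) y) y :=
    fun y => (hc1.differentiable (by simp) y).hasDerivAt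
  have hd2 : ∀ y, HasDerivAt (deriv (deriv f)) (deriv (deriv (deriv f)) y) y :=
    fun y => (hc2.differentiable (by simp) y).hasDerivAt
  have hd3 : ∀ y, HasDerivAt (deriv (deriv (deriv f))) (deriv (deriv (deriv (deriv f))) y) y :=
    fun y => (hc3.differentiable (by simp) y).hasDerivAt
  -- first derivative of Ahat b f at points y with y + b ≠ 0
  have hA1 : ∀ y : ℝ, y + b ≠ 0 → HasDerivAt (Ahat b f)
      (deriv (deriv (deriv f)) y - (2 * deriv f y + 2 * y * deriv (deriv f) y)
        + b ^ 2 * deriv f y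
        - ((deriv (deriv f) y + b * deriv f y) * (y + b) - (deriv f y + b * f y))
            / (y + b) ^ 2) y := by
    intro y hy
    have h := (((hd2 y).sub (((hasDerivAt_id y).const_mul 2).mul (hd1 y))).add
        ((hd0 y).const_mul (b ^ 2))).sub
        (((hd1 y).add ((hd0 y).const_mul b)).div ((hasDerivAt_id y).add_const b) hy)
    have he : Ahat b f = fun z =>
        deriv (deriv f) z - 2 * z * deriv f z + b ^ 2 * f z
          - (deriv f z + b * f z) / (z + b) := by
      funext z; simp [Ahat, T2, Uop]
    rw [he]
    refine (h.congr_deriv ?_).congr_of_eventuallyEq (Filter.Eventually.of_forall fun z => ?_)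
    · simp only [id_eq, Pi.add_apply]
      ring
    · simp only [Pi.sub_apply, Pi.add_apply, Pi.mul_apply, Pi.div_apply, id_eq]
  have hAd : deriv (Ahat b f) x
      = deriv (deriv (deriv f)) x - (2 * deriv f x + 2 * x * deriv (deriv f) x)
        + b ^ 2 * deriv f x
        - ((deriv (deriv f) x + b * deriv f x) * (x + b) - (deriv f x + b * f x))
            / (x + b) ^ 2 := (hA1 x hxb).deriv
  -- eventual equality of the derivative near x
  have hev : ∀ᶠ y in nhds x, y + b ≠ 0 := by
    have := eventually_ne_nhds hx
    exact this.mono (fun y hy h => hy (by linarith))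
  have hEv : deriv (Ahat b f) =ᶠ[nhds x] (fun y =>
      deriv (deriv (deriv f)) y - (2 * deriv f y + 2 * y * deriv (deriv f) y)
        + b ^ 2 * deriv f y
        - ((deriv (deriv f) y + b * deriv f y) * (y + b) - (deriv f y + b * f y))
            / (y + b) ^ 2) :=
    hev.mono (fun y hy => (hA1 y hy).deriv)
  -- second derivative of Ahat b f at x
  have hNum : HasDerivAt (fun y : ℝ =>
      (deriv (deriv f) y + b * deriv f y) * (y + b) - (deriv f y + b * f y))
      ((deriv (deriv (deriv f)) x + b * deriv (deriv f) x) * (x + b)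
        + (deriv (deriv f) x + b * deriv f x) * 1
        - (deriv (deriv f) x + b * deriv f x)) x :=
    (((hd2 x).add ((hd1 x).const_mul b)).mul ((hasDerivAt_id x).add_const b)).sub
      ((hd1 x).add ((hd0 x).const_mul b))
  have hDen : HasDerivAt (fun y : ℝ => (y + b) ^ 2) (2 * (x + b) ^ 1 * 1) x :=
    ((hasDerivAt_id x).add_const b).pow 2
  have hden0 : (x + b) ^ 2 ≠ 0 := pow_ne_zero 2 hxb
  have hD2 : HasDerivAt (fun y =>
      deriv (deriv (deriv f)) y - (2 * deriv f y + 2 * y * deriv (deriv f) y)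
        + b ^ 2 * deriv f y
        - ((deriv (deriv f) y + b * deriv f y) * (y + b) - (deriv f y + b * f y))
            / (y + b) ^ 2)
      (deriv (deriv (deriv (deriv f))) x
        - (2 * deriv (deriv f) x + (2 * deriv (deriv f) x + 2 * x * deriv (deriv (deriv f)) x))
        + b ^ 2 * deriv (deriv f) x
        - (((deriv (deriv (deriv f)) x + b * deriv (deriv f) x) * (x + b)
              + (deriv (deriv f) x + b * deriv f x) * 1
              - (deriv (deriv f) x + b * deriv f x)) * (x + b) ^ 2
            - ((deriv (deriv f) x + b * deriv f x) * (x + b) - (deriv f x + b * f x))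
                * (2 * (x + b) ^ 1 * 1)) / ((x + b) ^ 2) ^ 2) x := by
    have h := (((hd3 x).sub (((hd1 x).const_mul 2).add
        (((hasDerivAt_id x).const_mul 2).mul (hd2 x)))).add
        ((hd1 x).const_mul (b ^ 2))).sub (hNum.div hDen hden0)
    refine (h.congr_deriv ?_).congr_of_eventuallyEq (Filter.Eventually.of_forall fun z => ?_)
    · simp only [id_eq, Pi.add_apply]
      ring
    · simp only [Pi.sub_apply, Pi.add_apply, Pi.mul_apply, Pi.div_apply, id_eq]
  have hAdd : deriv (deriv (Ahat b f)) x
      = deriv (deriv (deriv (deriv f))) x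
        - (2 * deriv (deriv f) x + (2 * deriv (deriv f) x + 2 * x * deriv (deriv (deriv f)) x))
        + b ^ 2 * deriv (deriv f) x
        - (((deriv (deriv (deriv f)) x + b * deriv (deriv f) x) * (x + b)
              + (deriv (deriv f) x + b * deriv f x) * 1
              - (deriv (deriv f) x + b * deriv f x)) * (x + b) ^ 2
            - ((deriv (deriv f) x + b * deriv f x) * (x + b) - (deriv f x + b * f x))
                * (2 * (x + b) ^ 1 * 1)) / ((x + b) ^ 2) ^ 2 := by
    rw [hEv.deriv_eq]
    exact hD2.deriv
  -- derivative of Ahat b f / (· + b) at x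
  have hQ : deriv (fun y => (deriv (deriv f) y - 2 * y * deriv f y + b ^ 2 * f y
          - (deriv f y + b * f y) / (y + b)) / (y + b)) x
      = ((deriv (deriv (deriv f)) x - (2 * deriv f x + 2 * x * deriv (deriv f) x)
          + b ^ 2 * deriv f x
          - ((deriv (deriv f) x + b * deriv f x) * (x + b) - (deriv f x + b * f x))
              / (x + b) ^ 2) * (x + b)
          - (deriv (deriv f) x - 2 * x * deriv f x + b ^ 2 * f x
              - (deriv f x + b * f x) / (x + b)) * 1) / (x + b) ^ 2 :=
    ((hA1 x hxb).div ((hasDerivAt_id x).add_const b) hxb).deriv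
  -- right-hand side derivatives
  have hG1 : deriv (fun y => deriv (deriv f) y - 2 * y * deriv f y + (b ^ 2 - 2) * f y)
      = fun y => deriv (deriv (deriv f)) y
          - (2 * 1 * deriv f y + 2 * y * deriv (deriv f) y) + (b ^ 2 - 2) * deriv f y := by
    funext y
    exact (((hd2 y).sub (((hasDerivAt_id y).const_mul 2).mul (hd1 y))).add
      ((hd0 y).const_mul (b ^ 2 - 2))).deriv
  have hG2 : deriv (fun y => deriv (deriv (deriv f)) y
          - (2 * 1 * deriv f y + 2 * y * deriv (deriv f) y) + (b ^ 2 - 2) * deriv f y) x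
      = deriv (deriv (deriv (deriv f))) x
          - (2 * 1 * deriv (deriv f) x
            + (2 * 1 * deriv (deriv f) x + 2 * x * deriv (deriv (deriv f)) x))
          + (b ^ 2 - 2) * deriv (deriv f) x := by
    refine HasDerivAt.deriv ?_
    exact ((hd3 x).sub (((hd1 x).const_mul (2 * 1)).add
      (((hasDerivAt_id x).const_mul 2).mul (hd2 x)))).add ((hd1 x).const_mul (b ^ 2 - 2))
  -- put everything together
  simp only [Adag, Vop, T2, Ahat, Uop]
  rw [hAdd, hAd, hQ, hG1, hG2]
  simp only [Ahat, T2, Uop]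
  field_simp
  ring
end

section
/- Let Â = T_2 + b² − (x+b)^{-1}∘(∂_x+b) and Â† = T_2 + b² − (−∂_x + 2x + b)∘(x+b)^{-1}, where T_2 = ∂_x² − 2x∂_x. Then the conjugation identity Â ∘ (x+b) = (x+b) ∘ Â† holds as operators. -/
theorem Ahat_conjugation (b : ℝ) (f : ℝ → ℝ) (hf : ContDiff ℝ (⊤ : ℕ∞) f)
    (x : ℝ) (hx : x ≠ -b) :
    Ahat b (fun y => (y + b) * f y) x = (x + b) * Adag b f x := by
  have hxb : x + b ≠ 0 := by
    intro h; apply hx; linarith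
  have hfd : Differentiable ℝ f := hf.differentiable (by simp)
  have hfd' : Differentiable ℝ (deriv f) :=
    by
    have hf2 : ContDiff ℝ ((⊤ : ℕ∞) : WithTop ℕ∞) f := hf.of_le (by simp)
    exact (contDiff_infty_iff_deriv.mp hf2).2.differentiable (by simp)
  have hlin : Differentiable ℝ (fun y : ℝ => y + b) :=
    differentiable_id.add_const b
  have hg : deriv (fun y => (y + b) * f y) = fun y => f y + (y + b) * deriv f y := by
    funext y
    rw [deriv_fun_mul (hlin y) (hfd y)]
    simp [deriv_add_const]
  have hg2 : deriv (fun y => f y + (y + b) * deriv f y) x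
      = 2 * deriv f x + (x + b) * deriv (deriv f) x := by
    rw [deriv_fun_add (hfd x) (((hlin x).fun_mul (hfd' x)))]
    rw [deriv_fun_mul (hlin x) (hfd' x)]
    simp [deriv_add_const]
    ring
  have hh : deriv (fun y => f y / (y + b)) x
      = (deriv f x * (x + b) - f x) / (x + b) ^ 2 := by
    rw [deriv_fun_div (hfd x) (hlin x) hxb]
    simp [deriv_add_const]
  simp only [Ahat, Adag, T2, Uop, Vop, hg, hg2, hh]
  field_simp
  ring
end
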